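/- arXiv:1010.5816 — 2 statements merged into one kernel-verified Lean document; each statement's English description precedes it below -/
import Mathlib

section
/- For every positive integer m with m ≥ 3, exactly one of the following holds: m is odd, or m = 2⌊φn⌋+2 for some positive integer n, or m = 2⌊φ²n⌋+2 for some positive integer n; moreover the n in the latter two cases is unique. -/
/-!
Since `φ⁻¹ + (φ²)⁻¹ = 1` and `φ` is irrational, Rayleigh's theorem says that the Beatty sequences
`⌊φn⌋` and `⌊φ²n⌋` (`n ≥ 1`) partition the positive integers. An even `m ≥ 4` is `2k + 2` with
`k ≥ 1`, so it has exactly one of the two forms; an odd `m` has neither. Uniqueness of `n` holds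
because `n ↦ ⌊rn⌋` is strictly increasing for `r ≥ 1`.
-/

noncomputable def goldenPhi : ℝ := (1 + Real.sqrt 5) / 2

open Real goldenRatio

lemma goldenPhi_eq_goldenRatio : goldenPhi = φ := rfl

lemma goldenRatio_holderConjugate_sq : HolderConjugate φ (φ ^ 2) := by
  rw [Real.holderConjugate_iff]
  refine ⟨one_lt_goldenRatio, ?_⟩
  rw [← inv_pow, inv_goldenRatio, neg_sq, goldenConj_sq]
  ring

lemma strictMono_natFloor_mul {r : ℝ} (hr : 1 ≤ r) : StrictMono fun n : ℕ ↦ ⌊r * n⌋₊ := by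
  intro a b hab
  have hr₀ : 0 ≤ r := zero_le_one.trans hr
  have hstep : r * a + 1 ≤ r * b := by
    have : (a : ℝ) + 1 ≤ b := by exact_mod_cast hab
    nlinarith
  calc ⌊r * a⌋₊ < ⌊r * a⌋₊ + 1 := Nat.lt_succ_self _
    _ = ⌊r * a + 1⌋₊ := (Nat.floor_add_one (by positivity)).symm
    _ ≤ ⌊r * b⌋₊ := Nat.floor_le_floor hstep

lemma mem_beattySeq_pos_iff {r : ℝ} (hr : 0 ≤ r) (k : ℕ) :
    (k : ℤ) ∈ {beattySeq r j | j > 0} ↔ ∃ n : ℕ, 0 < n ∧ ⌊r * n⌋₊ = k := by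
  have hfloor (n : ℕ) : beattySeq r n = ⌊r * n⌋₊ := by
    rw [beattySeq, Int.natCast_floor_eq_floor (by positivity), Int.cast_natCast, mul_comm]
  constructor
  · rintro ⟨j, hj, hjk⟩
    lift j to ℕ using hj.le
    exact ⟨j, Int.natCast_pos.mp hj, Int.natCast_inj.mp ((hfloor j).symm.trans hjk)⟩
  · rintro ⟨n, hn, rfl⟩
    exact ⟨n, Int.natCast_pos.mpr hn, hfloor n⟩

/-- **Rayleigh's theorem**, for natural numbers and `Nat.floor`. -/
theorem Irrational.xor_exists_natFloor_mul_eq {r s : ℝ} (hrs : r.HolderConjugate s)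
    (hr : Irrational r) {k : ℕ} (hk : 0 < k) :
    Xor (∃ n : ℕ, 0 < n ∧ ⌊r * n⌋₊ = k) (∃ n : ℕ, 0 < n ∧ ⌊s * n⌋₊ = k) := by
  have hmem : (k : ℤ) ∈ {x : ℤ | 0 < x} := Int.natCast_pos.mpr hk
  rw [← hr.beattySeq_symmDiff_beattySeq_pos hrs, Set.mem_symmDiff,
    mem_beattySeq_pos_iff hrs.nonneg, mem_beattySeq_pos_iff hrs.symm.nonneg] at hmem
  exact hmem

/-- For every m ≥ 3, exactly one of: m is odd, m = 2⌊φn⌋+2 for some n ≥ 1,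
or m = 2⌊φ²n⌋+2 for some n ≥ 1 holds; and the n is unique in the latter cases. -/
theorem odd_or_even_beatty :
    ∀ m : ℕ, 3 ≤ m →
      ((Odd m ∧ ¬(∃ n : ℕ, 0 < n ∧ m = 2 * ⌊goldenPhi * n⌋₊ + 2) ∧
          ¬(∃ n : ℕ, 0 < n ∧ m = 2 * ⌊goldenPhi ^ 2 * n⌋₊ + 2)) ∨
       (¬Odd m ∧ (∃ n : ℕ, 0 < n ∧ m = 2 * ⌊goldenPhi * n⌋₊ + 2) ∧
          ¬(∃ n : ℕ, 0 < n ∧ m = 2 * ⌊goldenPhi ^ 2 * n⌋₊ + 2)) ∨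
       (¬Odd m ∧ ¬(∃ n : ℕ, 0 < n ∧ m = 2 * ⌊goldenPhi * n⌋₊ + 2) ∧
          (∃ n : ℕ, 0 < n ∧ m = 2 * ⌊goldenPhi ^ 2 * n⌋₊ + 2))) ∧
      (∀ n₁ n₂ : ℕ, 0 < n₁ → 0 < n₂ →
        m = 2 * ⌊goldenPhi * n₁⌋₊ + 2 → m = 2 * ⌊goldenPhi * n₂⌋₊ + 2 → n₁ = n₂) ∧
      (∀ n₁ n₂ : ℕ, 0 < n₁ → 0 < n₂ →
        m = 2 * ⌊goldenPhi ^ 2 * n₁⌋₊ + 2 → m = 2 * ⌊goldenPhi ^ 2 * n₂⌋₊ + 2 →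
          n₁ = n₂) := by
  intro m hm
  have hφ := goldenRatio_holderConjugate_sq
  rw [goldenPhi_eq_goldenRatio]
  refine ⟨?_, fun n₁ n₂ _ _ h₁ h₂ ↦ (strictMono_natFloor_mul hφ.lt.le).injective (by omega),
    fun n₁ n₂ _ _ h₁ h₂ ↦ (strictMono_natFloor_mul hφ.symm.lt.le).injective (by omega)⟩
  rcases Nat.even_or_odd m with ⟨k, rfl⟩ | hodd
  · have hform (r : ℝ) : (∃ n : ℕ, 0 < n ∧ k + k = 2 * ⌊r * n⌋₊ + 2) ↔
        ∃ n : ℕ, 0 < n ∧ ⌊r * n⌋₊ = k - 1 :=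
      exists_congr fun n ↦ and_congr_right fun _ ↦ by omega
    have heven : ¬Odd (k + k) := Nat.not_odd_iff_even.mpr ⟨k, rfl⟩
    simp only [hform]
    rcases goldenRatio_irrational.xor_exists_natFloor_mul_eq hφ (k := k - 1) (by omega) with
      ⟨hrep, hnrep⟩ | ⟨hrep, hnrep⟩
    · exact .inr (.inl ⟨heven, hrep, hnrep⟩)
    · exact .inr (.inr ⟨heven, hnrep, hrep⟩)
  · refine .inl ⟨hodd, ?_, ?_⟩ <;>
      rintro ⟨n, -, rfl⟩ <;> exact Nat.not_odd_iff_even.mpr (even_two_mul _ |>.add even_two) hodd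
end

section
/- Define the P-positions of Blocking-k Wythoff Nim recursively: a position is P if strictly fewer than k of its Wythoff Nim options are P. For k = 2, the set of P-positions equals R₂ = {(0,0)} ∪ {(n,2n+1),(2n+1,n) : n ∈ ℕ₀} ∪ {(2⌊φn⌋+2, 2⌊φ²n⌋+2),(2⌊φ²n⌋+2, 2⌊φn⌋+2) : n ∈ ℕ₀}. -/
/-!
The even part of `R₂` is `(2, 2) + 2 • W`, where `W` is the set of Wythoff pairs
`{⌊nφ⌋, ⌊nφ²⌋} = {⌊nφ⌋, ⌊nφ⌋ + n}`. By Rayleigh's theorem for `φ` and `φ²`, every `a` has exactly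
one Wythoff partner, each diagonal `b - a = n` carries exactly one pair with `a ≤ b`, and every
non-pair has a Wythoff move to a pair. Hence column `x` of `R₂` consists of `(x, 2x + 1)` and a
single point of height at most `2x`, a point of `R₂` has at most one option in `R₂`, and a point
outside `R₂` has at least two. So `R₂` satisfies the recursion defining the P-positions of
Blocking-2 Wythoff Nim, whose solution is unique by well-founded induction.
-/

/-- `q` is a Wythoff Nim option of `p`: a horizontal, vertical or diagonal move. -/
def IsOption (q p : ℕ × ℕ) : Prop :=
  (q.1 < p.1 ∧ q.2 = p.2) ∨ (q.1 = p.1 ∧ q.2 < p.2) ∨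
  (q.1 < p.1 ∧ q.2 < p.2 ∧ p.1 - q.1 = p.2 - q.2)

lemma IsOption.sum_lt {q p : ℕ × ℕ} (h : IsOption q p) : q.1 + q.2 < p.1 + p.2 := by
  rcases h with ⟨h1, h2⟩ | ⟨h1, h2⟩ | ⟨h1, h2, _⟩ <;> omega

/-- A position of Blocking-k Wythoff Nim is a P-position iff strictly fewer than
`k` of its options are P-positions. -/
def IsP (k : ℕ) (p : ℕ × ℕ) : Prop :=
  Set.ncard {q : ℕ × ℕ | ∃ _ : IsOption q p, IsP k q} < k
termination_by p.1 + p.2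
decreasing_by exact IsOption.sum_lt ‹_›

/-- The candidate set of P-positions of Blocking-2 Wythoff Nim. -/
def R2 : Set (ℕ × ℕ) :=
  {(0, 0)} ∪
  {p | ∃ n : ℕ, p = (n, 2 * n + 1) ∨ p = (2 * n + 1, n)} ∪
  {p | ∃ n : ℕ, p = (2 * ⌊goldenPhi * n⌋₊ + 2, 2 * ⌊goldenPhi ^ 2 * n⌋₊ + 2) ∨
                p = (2 * ⌊goldenPhi ^ 2 * n⌋₊ + 2, 2 * ⌊goldenPhi * n⌋₊ + 2)}

open Set

lemma isOption_swap {q p : ℕ × ℕ} : IsOption q.swap p.swap ↔ IsOption q p := by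
  unfold IsOption
  simp only [Prod.fst_swap, Prod.snd_swap]
  omega

def optionsIn (R : Set (ℕ × ℕ)) (p : ℕ × ℕ) : Set (ℕ × ℕ) := {q | IsOption q p ∧ q ∈ R}

lemma finite_optionsIn (R : Set (ℕ × ℕ)) (p : ℕ × ℕ) : (optionsIn R p).Finite := by
  refine ((finite_Iic p.1).prod (finite_Iic p.2)).subset fun q ⟨hq, _⟩ => ?_
  unfold IsOption at hq
  exact ⟨by simp only [mem_Iic]; omega, by simp only [mem_Iic]; omega⟩

lemma optionsIn_swap {R : Set (ℕ × ℕ)} (hR : ∀ q : ℕ × ℕ, q.swap ∈ R ↔ q ∈ R) (p : ℕ × ℕ) :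
    optionsIn R p.swap = Prod.swap '' optionsIn R p := by
  ext q
  rw [image_swap_eq_preimage_swap, mem_preimage, optionsIn, optionsIn, mem_ofPred_eq,
    mem_ofPred_eq, hR, ← isOption_swap, Prod.swap_swap]

theorem isP_iff_of_forall_mem_iff {k : ℕ} {R : Set (ℕ × ℕ)}
    (hR : ∀ p, p ∈ R ↔ (optionsIn R p).ncard < k) (p : ℕ × ℕ) : IsP k p ↔ p ∈ R := by
  induction hs : p.1 + p.2 using Nat.strong_induction_on generalizing p with
  | _ s ih =>
    have hopt : {q | ∃ _ : IsOption q p, IsP k q} = optionsIn R p := by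
      ext q
      simp only [optionsIn, mem_ofPred_eq, exists_prop]
      exact and_congr_right fun hq => ih _ (hs ▸ hq.sum_lt) q rfl
    rw [IsP, hopt, hR]

lemma one_lt_goldenPhi : 1 < goldenPhi := Real.one_lt_goldenRatio

lemma goldenPhi_sq : goldenPhi ^ 2 = goldenPhi + 1 := Real.goldenRatio_sq

noncomputable def lowerWythoff (n : ℕ) : ℕ := ⌊goldenPhi * n⌋₊

lemma floor_goldenPhi_mul (n : ℕ) : ⌊goldenPhi * n⌋₊ = lowerWythoff n := rfl

lemma floor_goldenPhi_sq_mul (n : ℕ) : ⌊goldenPhi ^ 2 * n⌋₊ = lowerWythoff n + n := by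
  rw [goldenPhi_sq, add_mul, one_mul, lowerWythoff,
    Nat.floor_add_natCast (by positivity [one_lt_goldenPhi])]

@[simp]
lemma lowerWythoff_zero : lowerWythoff 0 = 0 := by simp [lowerWythoff]

lemma le_lowerWythoff (n : ℕ) : n ≤ lowerWythoff n :=
  Nat.le_floor <| le_mul_of_one_le_left n.cast_nonneg one_lt_goldenPhi.le

lemma lowerWythoff_strictMono : StrictMono lowerWythoff := by
  refine strictMono_nat_of_lt_succ fun n => ?_
  calc lowerWythoff n < ⌊goldenPhi * n + 1⌋₊ := by
        rw [Nat.floor_add_one (by positivity [one_lt_goldenPhi])]; exact lt_add_one _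
    _ ≤ lowerWythoff (n + 1) := by
        unfold lowerWythoff
        gcongr
        push_cast
        linarith [one_lt_goldenPhi]

lemma natCast_lowerWythoff (n : ℕ) : (lowerWythoff n : ℤ) = beattySeq goldenPhi n := by
  rw [lowerWythoff, beattySeq, mul_comm, Int.cast_natCast]
  exact Int.natCast_floor_eq_floor (by positivity [one_lt_goldenPhi])

lemma natCast_lowerWythoff_add_self (n : ℕ) :
    ((lowerWythoff n + n : ℕ) : ℤ) = beattySeq (goldenPhi ^ 2) n := by
  rw [← floor_goldenPhi_sq_mul, beattySeq, mul_comm, Int.cast_natCast]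
  exact Int.natCast_floor_eq_floor (by positivity [one_lt_goldenPhi])

lemma goldenPhi_holderConjugate : goldenPhi.HolderConjugate (goldenPhi ^ 2) := by
  rw [Real.holderConjugate_iff]
  refine ⟨one_lt_goldenPhi, ?_⟩
  have := one_lt_goldenPhi
  field_simp
  linarith [goldenPhi_sq]

open scoped symmDiff in
lemma natCast_mem_beattySeq_goldenPhi_symmDiff {m : ℕ} (hm : 0 < m) :
    (m : ℤ) ∈ {beattySeq goldenPhi k | k > 0} ∆ {beattySeq (goldenPhi ^ 2) k | k > 0} := by
  rw [Irrational.beattySeq_symmDiff_beattySeq_pos goldenPhi_holderConjugate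
    Real.goldenRatio_irrational]
  exact Int.natCast_pos.mpr hm

lemma exists_lowerWythoff_eq_or_add_self_eq (m : ℕ) :
    ∃ k, lowerWythoff k = m ∨ lowerWythoff k + k = m := by
  rcases Nat.eq_zero_or_pos m with rfl | hm
  · exact ⟨0, by simp⟩
  rcases natCast_mem_beattySeq_goldenPhi_symmDiff hm with ⟨⟨k, hk, he⟩, -⟩ | ⟨⟨k, hk, he⟩, -⟩ <;>
    lift k to ℕ using hk.le
  · exact ⟨k, Or.inl (by rw [← natCast_lowerWythoff] at he; exact_mod_cast he)⟩
  · exact ⟨k, Or.inr (by rw [← natCast_lowerWythoff_add_self] at he; exact_mod_cast he)⟩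

lemma lowerWythoff_eq_add_self_iff {j k : ℕ} :
    lowerWythoff j = lowerWythoff k + k ↔ j = 0 ∧ k = 0 := by
  refine ⟨fun h => ?_, by rintro ⟨rfl, rfl⟩; simp⟩
  rcases Nat.eq_zero_or_pos k with rfl | hk
  · exact ⟨lowerWythoff_strictMono.injective (by simpa using h), rfl⟩
  have hj : 0 < j := Nat.pos_of_ne_zero fun hj0 => by
    rw [hj0, lowerWythoff_zero] at h
    omega
  rcases natCast_mem_beattySeq_goldenPhi_symmDiff (lt_of_lt_of_le hj (le_lowerWythoff j)) with
    ⟨-, hnot⟩ | ⟨-, hnot⟩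
  · exact absurd ⟨k, by exact_mod_cast hk, by rw [← natCast_lowerWythoff_add_self, h]⟩ hnot
  · exact absurd ⟨j, by exact_mod_cast hj, (natCast_lowerWythoff j).symm⟩ hnot

def IsWythoffPair (a b : ℕ) : Prop :=
  ∃ n, (a = lowerWythoff n ∧ b = lowerWythoff n + n) ∨ (a = lowerWythoff n + n ∧ b = lowerWythoff n)

namespace IsWythoffPair

variable {a b c d : ℕ}

lemma zero_zero : IsWythoffPair 0 0 := ⟨0, Or.inl (by simp)⟩

lemma symm (h : IsWythoffPair a b) : IsWythoffPair b a := by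
  obtain ⟨n, h | h⟩ := h
  exacts [⟨n, Or.inr h.symm⟩, ⟨n, Or.inl h.symm⟩]

lemma exists_of_le (h : IsWythoffPair a b) (hab : a ≤ b) :
    ∃ n, a = lowerWythoff n ∧ b = lowerWythoff n + n := by
  obtain ⟨n, h | ⟨rfl, rfl⟩⟩ := h
  · exact ⟨n, h⟩
  · obtain rfl : n = 0 := by omega
    exact ⟨0, by simp⟩

lemma le_two_mul (h : IsWythoffPair a b) : b ≤ 2 * a := by
  obtain ⟨n, ⟨rfl, rfl⟩ | ⟨rfl, rfl⟩⟩ := h <;> have := le_lowerWythoff n <;> omega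

lemma unique (h : IsWythoffPair a b) (h' : IsWythoffPair a c) : b = c := by
  obtain ⟨n, ⟨rfl, rfl⟩ | ⟨rfl, rfl⟩⟩ := h <;> obtain ⟨m, ⟨ha, rfl⟩ | ⟨ha, rfl⟩⟩ := h'
  · obtain rfl := lowerWythoff_strictMono.injective ha; rfl
  · obtain ⟨rfl, rfl⟩ := lowerWythoff_eq_add_self_iff.mp ha; rfl
  · obtain ⟨rfl, rfl⟩ := lowerWythoff_eq_add_self_iff.mp ha.symm; rfl
  · obtain rfl : n = m := lowerWythoff_strictMono.add_monotone monotone_id |>.injective ha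
    rfl

lemma eq_of_sub_eq (h : IsWythoffPair a b) (h' : IsWythoffPair c d) (hab : a ≤ b) (hcd : c ≤ d)
    (he : b - a = d - c) : a = c := by
  obtain ⟨n, rfl, rfl⟩ := h.exists_of_le hab
  obtain ⟨m, rfl, rfl⟩ := h'.exists_of_le hcd
  obtain rfl : n = m := by omega
  rfl

end IsWythoffPair

lemma exists_isWythoffPair (a : ℕ) : ∃ b, IsWythoffPair a b := by
  obtain ⟨k, rfl | rfl⟩ := exists_lowerWythoff_eq_or_add_self_eq a
  exacts [⟨_, k, Or.inl ⟨rfl, rfl⟩⟩, ⟨_, k, Or.inr ⟨rfl, rfl⟩⟩]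

/-- One half of Wythoff's theorem. -/
lemma exists_isOption_isWythoffPair {a b : ℕ} (h : ¬IsWythoffPair a b) :
    ∃ q : ℕ × ℕ, IsOption q (a, b) ∧ IsWythoffPair q.1 q.2 := by
  wlog hab : a ≤ b generalizing a b
  · obtain ⟨q, hq, hq'⟩ := this (fun h' => h h'.symm) (by omega)
    exact ⟨q.swap, isOption_swap.mpr hq, hq'.symm⟩
  obtain ⟨n, rfl⟩ := Nat.exists_eq_add_of_le hab
  rcases lt_trichotomy (lowerWythoff n) a with hlt | heq | hgt
  · refine ⟨(lowerWythoff n, lowerWythoff n + n), ?_, n, Or.inl ⟨rfl, rfl⟩⟩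
    unfold IsOption; omega
  · exact absurd ⟨n, Or.inl ⟨heq.symm, by rw [heq]⟩⟩ h
  obtain ⟨c, hc⟩ := exists_isWythoffPair a
  refine ⟨(a, c), ?_, hc⟩
  obtain ⟨k, ⟨rfl, rfl⟩ | ⟨rfl, rfl⟩⟩ := hc
  · have := lowerWythoff_strictMono.lt_iff_lt.mp hgt
    unfold IsOption; omega
  · rcases Nat.eq_zero_or_pos n with rfl | hn
    · simp at hgt
    · unfold IsOption; omega

lemma mem_R2_iff {x y : ℕ} : (x, y) ∈ R2 ↔ (x = 0 ∧ y = 0) ∨ y = 2 * x + 1 ∨ x = 2 * y + 1 ∨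
    ∃ a b, x = 2 * a + 2 ∧ y = 2 * b + 2 ∧ IsWythoffPair a b := by
  simp only [R2, floor_goldenPhi_sq_mul, floor_goldenPhi_mul, mem_union, mem_singleton_iff,
    mem_ofPred_eq, Prod.mk.injEq]
  constructor
  · rintro ((h | ⟨n, ⟨rfl, h⟩ | ⟨h, rfl⟩⟩) | ⟨n, ⟨rfl, rfl⟩ | ⟨rfl, rfl⟩⟩)
    · exact Or.inl h
    · exact Or.inr (Or.inl h)
    · exact Or.inr (Or.inr (Or.inl h))
    · exact Or.inr (Or.inr (Or.inr ⟨_, _, rfl, rfl, n, Or.inl ⟨rfl, rfl⟩⟩))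
    · exact Or.inr (Or.inr (Or.inr ⟨_, _, rfl, rfl, n, Or.inr ⟨rfl, rfl⟩⟩))
  · rintro (h | h | h | ⟨a, b, rfl, rfl, n, ⟨rfl, rfl⟩ | ⟨rfl, rfl⟩⟩)
    · exact Or.inl (Or.inl h)
    · exact Or.inl (Or.inr ⟨x, Or.inl ⟨rfl, h⟩⟩)
    · exact Or.inl (Or.inr ⟨y, Or.inr ⟨h, rfl⟩⟩)
    · exact Or.inr ⟨n, Or.inl ⟨rfl, rfl⟩⟩
    · exact Or.inr ⟨n, Or.inr ⟨rfl, rfl⟩⟩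

lemma swap_mem_R2 {q : ℕ × ℕ} : q.swap ∈ R2 ↔ q ∈ R2 := by
  obtain ⟨x, y⟩ := q
  rw [Prod.swap_prod_mk, mem_R2_iff, mem_R2_iff]
  constructor <;>
  · rintro (⟨rfl, rfl⟩ | h | h | ⟨a, b, rfl, rfl, h⟩)
    exacts [Or.inl ⟨rfl, rfl⟩, Or.inr (Or.inr (Or.inl h)), Or.inr (Or.inl h),
      Or.inr (Or.inr (Or.inr ⟨b, a, rfl, rfl, h.symm⟩))]

lemma exists_mem_R2_le_two_mul (x : ℕ) : ∃ v ≤ 2 * x, (x, v) ∈ R2 := by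
  rcases Nat.even_or_odd' x with ⟨m, rfl | rfl⟩
  · rcases m with _ | a
    · exact ⟨0, le_rfl, mem_R2_iff.mpr (Or.inl ⟨rfl, rfl⟩)⟩
    obtain ⟨b, hab⟩ := exists_isWythoffPair a
    have := hab.le_two_mul
    exact ⟨2 * b + 2, by omega, mem_R2_iff.mpr (Or.inr (Or.inr (Or.inr ⟨a, b, rfl, rfl, hab⟩)))⟩
  · exact ⟨m, by omega, mem_R2_iff.mpr (Or.inr (Or.inr (Or.inl rfl)))⟩

lemma eq_of_mem_R2_of_le_two_mul {x v w : ℕ} (hv : (x, v) ∈ R2) (hw : (x, w) ∈ R2)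
    (hv' : v ≤ 2 * x) (hw' : w ≤ 2 * x) : v = w := by
  rcases mem_R2_iff.mp hv with h | h | h | ⟨a, b, rfl, rfl, hab⟩ <;>
    rcases mem_R2_iff.mp hw with h' | h' | h' | ⟨a', b', ha, rfl, hab'⟩ <;> try omega
  obtain rfl : a = a' := by omega
  rw [hab.unique hab']

lemma optionsIn_R2_odd {x : ℕ} {q : ℕ × ℕ} (hq : q ∈ optionsIn R2 (x, 2 * x + 1)) :
    q.1 = x ∧ q.2 ≤ 2 * x := by
  obtain ⟨u, v⟩ := q
  obtain ⟨hq, hR⟩ := hq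
  unfold IsOption at hq
  rcases mem_R2_iff.mp hR with h | h | h | ⟨a, b, rfl, rfl, hab⟩
  any_goals simp only at hq ⊢; omega
  have := hab.le_two_mul
  simp only at hq ⊢
  omega

lemma optionsIn_R2_even {a b : ℕ} (hab : IsWythoffPair a b) (hle : a ≤ b) {q : ℕ × ℕ}
    (hq : q ∈ optionsIn R2 (2 * a + 2, 2 * b + 2)) :
    (a < b ∧ q = (2 * (b - a) - 1, 4 * (b - a) - 1)) ∨ (a = b ∧ q = (0, 0)) := by
  obtain ⟨u, v⟩ := q
  obtain ⟨hq, hR⟩ := hq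
  unfold IsOption at hq
  simp only [Prod.mk.injEq] at hq ⊢
  have := hab.le_two_mul
  rcases mem_R2_iff.mp hR with h | h | h | ⟨c, d, rfl, rfl, hcd⟩
  any_goals omega
  rcases hq with ⟨hc, hd⟩ | ⟨hc, hd⟩ | ⟨hc, hd, he⟩
  · obtain rfl : d = b := by omega
    have := hcd.symm.unique hab.symm
    omega
  · obtain rfl : c = a := by omega
    have := hab.unique hcd
    omega
  · rcases le_or_gt c d with hcd' | hcd'
    · have := hab.eq_of_sub_eq hcd hle hcd' (by omega)
      omega
    · omega

lemma subsingleton_optionsIn_R2 {p : ℕ × ℕ} (hp : p ∈ R2) : (optionsIn R2 p).Subsingleton := by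
  wlog hxy : p.1 ≤ p.2 generalizing p
  · rw [← Prod.swap_swap p, optionsIn_swap @swap_mem_R2]
    exact (this (swap_mem_R2.mpr hp) (by simp only [Prod.fst_swap, Prod.snd_swap]; omega)).image _
  obtain ⟨x, y⟩ := p
  simp only at hxy
  rcases mem_R2_iff.mp hp with ⟨rfl, rfl⟩ | rfl | h | ⟨a, b, rfl, rfl, hab⟩
  · rintro q ⟨hq, -⟩
    unfold IsOption at hq
    omega
  · rintro ⟨u, v⟩ hq ⟨u', v'⟩ hq'
    obtain ⟨rfl, hv⟩ := optionsIn_R2_odd hq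
    obtain ⟨rfl, hv'⟩ := optionsIn_R2_odd hq'
    rw [eq_of_mem_R2_of_le_two_mul hq.2 hq'.2 hv hv']
  · omega
  · have hxy' : a ≤ b := by omega
    intro q hq q' hq'
    rcases optionsIn_R2_even hab hxy' hq with ⟨h, rfl⟩ | ⟨h, rfl⟩ <;>
      rcases optionsIn_R2_even hab hxy' hq' with ⟨h', rfl⟩ | ⟨h', rfl⟩ <;>
      first | rfl | omega

lemma nontrivial_optionsIn_R2_of_two_mul_add_one_lt {x y : ℕ} (hy : 2 * x + 1 < y) :
    (optionsIn R2 (x, y)).Nontrivial := by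
  obtain ⟨v, hv, hR⟩ := exists_mem_R2_le_two_mul x
  exact ⟨(x, 2 * x + 1), ⟨by unfold IsOption; omega, mem_R2_iff.mpr (Or.inr (Or.inl rfl))⟩,
    (x, v), ⟨by unfold IsOption; omega, hR⟩, by simp only [ne_eq, Prod.mk.injEq]; omega⟩

lemma nontrivial_optionsIn_R2_of_lt_of_le_two_mul {x y : ℕ} (hxy : x < y) (hy : y ≤ 2 * x)
    (hp : (x, y) ∉ R2) : (optionsIn R2 (x, y)).Nontrivial := by
  have hdiag : (y - x - 1, 2 * (y - x) - 1) ∈ optionsIn R2 (x, y) :=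
    ⟨by unfold IsOption; omega, mem_R2_iff.mpr (Or.inr (Or.inl (by omega)))⟩
  refine ⟨_, hdiag, ?_⟩
  rcases Nat.even_or_odd' x with ⟨a, rfl | rfl⟩
  · rcases Nat.even_or_odd' y with ⟨b, rfl | rfl⟩
    · obtain _ | a := a
      · omega
      obtain _ | b := b
      · omega
      have hab : ¬IsWythoffPair a b := fun hab =>
        hp (mem_R2_iff.mpr (Or.inr (Or.inr (Or.inr ⟨a, b, by ring, by ring, hab⟩))))
      obtain ⟨⟨c, d⟩, hq, hcd⟩ := exists_isOption_isWythoffPair hab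
      unfold IsOption at hq
      exact ⟨(2 * c + 2, 2 * d + 2), ⟨by unfold IsOption; omega,
        mem_R2_iff.mpr (Or.inr (Or.inr (Or.inr ⟨c, d, rfl, rfl, hcd⟩)))⟩,
        by simp only [ne_eq, Prod.mk.injEq]; omega⟩
    · exact ⟨(b, 2 * b + 1), ⟨by unfold IsOption; omega, mem_R2_iff.mpr (Or.inr (Or.inl rfl))⟩,
        by simp only [ne_eq, Prod.mk.injEq]; omega⟩
  · exact ⟨(2 * a + 1, a), ⟨by unfold IsOption; omega,
      mem_R2_iff.mpr (Or.inr (Or.inr (Or.inl rfl)))⟩, by simp only [ne_eq, Prod.mk.injEq]; omega⟩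

lemma nontrivial_optionsIn_R2 {p : ℕ × ℕ} (hp : p ∉ R2) : (optionsIn R2 p).Nontrivial := by
  wlog hxy : p.1 ≤ p.2 generalizing p
  · rw [← Prod.swap_swap p, optionsIn_swap @swap_mem_R2]
    refine (this (mt swap_mem_R2.mp hp) ?_).image Prod.swap_injective
    simp only [Prod.fst_swap, Prod.snd_swap]; omega
  obtain ⟨x, y⟩ := p
  simp only at hxy
  have h00 : (0, 0) ∈ R2 := mem_R2_iff.mpr (Or.inl ⟨rfl, rfl⟩)
  have h22 : (2, 2) ∈ R2 := mem_R2_iff.mpr (Or.inr (Or.inr (Or.inr ⟨0, 0, rfl, rfl, .zero_zero⟩)))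
  have h01 : (0, 1) ∈ R2 := mem_R2_iff.mpr (Or.inr (Or.inl rfl))
  have h10 : (1, 0) ∈ R2 := mem_R2_iff.mpr (Or.inr (Or.inr (Or.inl rfl)))
  rcases hxy.eq_or_lt with rfl | hxy
  · have hx0 : x ≠ 0 := by rintro rfl; exact hp h00
    have hx2 : x ≠ 2 := by rintro rfl; exact hp h22
    rcases (by omega : x = 1 ∨ 3 ≤ x) with rfl | hx
    · exact ⟨(0, 1), ⟨by unfold IsOption; omega, h01⟩, (1, 0), ⟨by unfold IsOption; omega, h10⟩,
        by simp⟩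
    · exact ⟨(0, 0), ⟨by unfold IsOption; omega, h00⟩, (2, 2), ⟨by unfold IsOption; omega, h22⟩,
        by simp⟩
  rcases lt_or_ge (2 * x) y with hy | hy
  · have : y ≠ 2 * x + 1 := by rintro rfl; exact hp (mem_R2_iff.mpr (Or.inr (Or.inl rfl)))
    exact nontrivial_optionsIn_R2_of_two_mul_add_one_lt (by omega)
  · exact nontrivial_optionsIn_R2_of_lt_of_le_two_mul hxy hy hp

lemma subsingleton_optionsIn_R2_iff (p : ℕ × ℕ) : (optionsIn R2 p).Subsingleton ↔ p ∈ R2 :=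
  ⟨fun h => by_contra fun hp => (nontrivial_optionsIn_R2 hp).not_subsingleton h,
    subsingleton_optionsIn_R2⟩

/-- The P-positions of Blocking-2 Wythoff Nim are exactly R₂. -/
theorem blocking_two_wythoff : ∀ p : ℕ × ℕ, IsP 2 p ↔ p ∈ R2 :=
  isP_iff_of_forall_mem_iff fun p => by
    have := (finite_optionsIn R2 p).to_subtype
    rw [Nat.lt_succ_iff, ncard_le_one_iff_subsingleton, subsingleton_optionsIn_R2_iff]
end
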